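/- A non-root vertex v of a DFS tree T of a connected undirected graph G is an articulation point of G if and only if v has a child c in T such that no edge of G connects a vertex of T(c) to a proper ancestor of v. -/

import Mathlib

/-- `u` is an ancestor of `v` with respect to the parent function `par`
(every vertex is an ancestor of itself). -/
def IsAncestor {V : Type*} (par : V → V) (u v : V) : Prop := ∃ n : ℕ, par^[n] v = u

/-- A spanning tree of `G` rooted at `r`, given by a parent function:
the root is its own parent, every vertex reaches the root by iterating
the parent function, and each non-root vertex is adjacent to its parent. -/
structure RootedSpanningTree {V : Type*} (G : SimpleGraph V) (r : V) where
  par : V → V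
  par_root : par r = r
  reaches_root : ∀ v, ∃ n : ℕ, par^[n] v = r
  adj_par : ∀ v, v ≠ r → G.Adj (par v) v

/-- Every edge of `G` joins two vertices in ancestor-descendant relation
in the tree, i.e. there are no cross edges (all non-tree edges are back edges). -/
def RootedSpanningTree.noCrossEdges {V : Type*} {G : SimpleGraph V} {r : V}
    (T : RootedSpanningTree G r) : Prop :=
  ∀ u v, G.Adj u v → IsAncestor T.par u v ∨ IsAncestor T.par v u

/-- `v` lies on the ancestor-descendant tree path from `x` down to `y`
(where `x` is an ancestor of `y`). -/
def OnTreePath {V : Type*} (par : V → V) (x y v : V) : Prop :=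
  IsAncestor par x v ∧ IsAncestor par v y

/-!
A tree path that avoids `v` is a path of `G − v`, so in `G − v` every vertex other than `v` is
connected to the root `r` or to a child `c` of `v`. Hence `v` separates the graph exactly when
some child `c` is cut off from `r`. If `c` is not cut off, the path to `r` must leave `T(c)`, and
since every edge joins an ancestor to a descendant, the first edge that does so goes to a proper
ancestor of `v`; conversely such an edge, together with tree paths, joins `c` to `r` avoiding `v`.
-/

namespace SimpleGraph

theorem reflTransGen_iff_reachable_deleteIncidenceSet {V : Type*} (G : SimpleGraph V)
    (v x y : V) :
    Relation.ReflTransGen (fun a b => G.Adj a b ∧ a ≠ v ∧ b ≠ v) x y ↔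
      (G.deleteIncidenceSet v).Reachable x y := by
  have hadj : (G.deleteIncidenceSet v).Adj = fun a b => G.Adj a b ∧ a ≠ v ∧ b ≠ v := by
    ext
    exact deleteIncidenceSet_adj
  rw [reachable_iff_reflTransGen, hadj]

end SimpleGraph

namespace IsAncestor

variable {V : Type*} {par : V → V} {u v w : V}

theorem refl (par : V → V) (v : V) : IsAncestor par v v := ⟨0, rfl⟩

theorem of_par_eq (h : par w = v) : IsAncestor par v w := ⟨1, h⟩

theorem trans (h₁ : IsAncestor par u v) (h₂ : IsAncestor par v w) : IsAncestor par u w := by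
  obtain ⟨m, rfl⟩ := h₁
  obtain ⟨n, rfl⟩ := h₂
  exact ⟨m + n, Function.iterate_add_apply par m n w⟩

theorem total_of_common (hu : IsAncestor par u w) (hv : IsAncestor par v w) :
    IsAncestor par u v ∨ IsAncestor par v u := by
  obtain ⟨m, rfl⟩ := hu
  obtain ⟨n, rfl⟩ := hv
  rcases le_total m n with h | h
  · exact Or.inr ⟨n - m, by rw [← Function.iterate_add_apply, Nat.sub_add_cancel h]⟩
  · exact Or.inl ⟨m - n, by rw [← Function.iterate_add_apply, Nat.sub_add_cancel h]⟩

theorem of_ne (h : IsAncestor par u w) (hne : u ≠ w) : IsAncestor par u (par w) := by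
  obtain ⟨_ | n, rfl⟩ := h
  · exact absurd rfl hne
  · exact ⟨n, (Function.iterate_succ_apply par n w).symm⟩

theorem exists_child (h : IsAncestor par v w) (hne : w ≠ v) :
    ∃ c, par c = v ∧ IsAncestor par c w := by
  obtain ⟨_ | n, rfl⟩ := h
  · exact absurd rfl hne
  · exact ⟨par^[n] w, (Function.iterate_succ_apply' par n w).symm, n, rfl⟩

end IsAncestor

namespace RootedSpanningTree

open SimpleGraph

variable {V : Type*} {G : SimpleGraph V} {r : V} (T : RootedSpanningTree G r)

theorem eq_root_of_iterate_eq_self {v : V} {k : ℕ} (hk : 0 < k) (h : T.par^[k] v = v) :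
    v = r := by
  obtain ⟨n, hn⟩ := T.reaches_root v
  have hcycle : T.par^[k * n] v = v := Function.IsPeriodicPt.mul_const h n
  have hroot : T.par^[k * n] v = r := by
    rw [← Nat.sub_add_cancel (Nat.le_mul_of_pos_left n hk), Function.iterate_add_apply, hn,
      Function.iterate_fixed T.par_root]
  exact hcycle.symm.trans hroot

theorem isAncestor_antisymm {u v : V} (huv : IsAncestor T.par u v)
    (hvu : IsAncestor T.par v u) : u = v := by
  obtain ⟨m, rfl⟩ := huv
  obtain ⟨n, hn⟩ := hvu
  rcases Nat.eq_zero_or_pos (n + m) with h | h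
  · obtain ⟨rfl, rfl⟩ : n = 0 ∧ m = 0 := by omega
    rfl
  · have hv : v = r := T.eq_root_of_iterate_eq_self h (by rwa [Function.iterate_add_apply])
    rw [hv, Function.iterate_fixed T.par_root]

theorem ne_root_of_par_eq {c v : V} (hv : v ≠ r) (hc : T.par c = v) : c ≠ r := fun hcr =>
  hv (by rw [← hc, hcr, T.par_root])

theorem not_isAncestor_of_par_eq {c v : V} (hv : v ≠ r) (hc : T.par c = v) :
    ¬ IsAncestor T.par c v := fun hcv => by
  have hcv : c = v := T.isAncestor_antisymm hcv (.of_par_eq hc)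
  subst hcv
  exact hv (T.eq_root_of_iterate_eq_self one_pos hc)

theorem reachable_of_not_onTreePath {u v w : V} (h : IsAncestor T.par u w)
    (hv : ¬ OnTreePath T.par u w v) : (G.deleteIncidenceSet v).Reachable w u := by
  obtain ⟨n, hn⟩ := h
  induction n generalizing w with
  | zero => exact hn ▸ .rfl
  | succ n ih =>
    rw [Function.iterate_succ_apply] at hn
    have hwv : w ≠ v := fun hwv =>
      hv ⟨⟨n + 1, by rwa [Function.iterate_succ_apply, ← hwv]⟩, hwv ▸ .refl _ _⟩
    by_cases hwr : w = r
    · subst hwr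
      exact ih hv (by rwa [T.par_root] at hn)
    have hpar : ¬ OnTreePath T.par u (T.par w) v := fun ⟨huv, hvw⟩ =>
      hv ⟨huv, hvw.trans (.of_par_eq rfl)⟩
    have hparv : T.par w ≠ v := fun hpv => hpar ⟨hpv ▸ ⟨n, hn⟩, hpv ▸ .refl _ _⟩
    have hadj : (G.deleteIncidenceSet v).Adj w (T.par w) :=
      deleteIncidenceSet_adj.mpr ⟨(T.adj_par w hwr).symm, hwv, hparv⟩
    exact hadj.reachable.trans (ih hpar hn)

theorem reachable_root_of_not_isAncestor {v w : V} (h : ¬ IsAncestor T.par v w) :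
    (G.deleteIncidenceSet v).Reachable w r :=
  T.reachable_of_not_onTreePath (T.reaches_root w) fun hp => h hp.2

theorem reachable_root_or_child {v w : V} (hv : v ≠ r) (hw : w ≠ v) :
    (G.deleteIncidenceSet v).Reachable w r ∨
      ∃ c, T.par c = v ∧ (G.deleteIncidenceSet v).Reachable w c := by
  by_cases hvw : IsAncestor T.par v w
  · obtain ⟨c, hc, hcw⟩ := hvw.exists_child hw
    exact Or.inr ⟨c, hc, T.reachable_of_not_onTreePath hcw
      fun hp => T.not_isAncestor_of_par_eq hv hc hp.1⟩
  · exact Or.inl (T.reachable_root_of_not_isAncestor hvw)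

theorem exists_child_not_reachable_root {v x y : V} (hv : v ≠ r) (hx : x ≠ v) (hy : y ≠ v)
    (hxy : ¬ (G.deleteIncidenceSet v).Reachable x y) :
    ∃ c, T.par c = v ∧ ¬ (G.deleteIncidenceSet v).Reachable c r := by
  by_contra! hchildren
  have hroot : ∀ w, w ≠ v → (G.deleteIncidenceSet v).Reachable w r := fun w hw =>
    (T.reachable_root_or_child hv hw).elim id fun ⟨c, hc, hwc⟩ => hwc.trans (hchildren c hc)
  exact hxy ((hroot x hx).trans (hroot y hy).symm)

/-- An edge from `T(c)` to a proper ancestor of `v = par c` bypasses `v`. -/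
theorem no_edge_to_proper_ancestor_of_not_reachable {v c : V} (hv : v ≠ r) (hc : T.par c = v)
    (hcr : ¬ (G.deleteIncidenceSet v).Reachable c r) (a b : V) (hca : IsAncestor T.par c a)
    (hab : G.Adj a b) : ¬ (IsAncestor T.par b v ∧ b ≠ v) := by
  rintro ⟨hbv, hbne⟩
  have hcv := T.not_isAncestor_of_par_eq hv hc
  have hac : (G.deleteIncidenceSet v).Reachable a c :=
    T.reachable_of_not_onTreePath hca fun hp => hcv hp.1
  have hav : a ≠ v := fun hav => hcv (hav ▸ hca)
  have hbr : (G.deleteIncidenceSet v).Reachable b r :=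
    T.reachable_root_of_not_isAncestor fun hvb => hbne (T.isAncestor_antisymm hbv hvb)
  have hab' : (G.deleteIncidenceSet v).Adj a b := deleteIncidenceSet_adj.mpr ⟨hab, hav, hbne⟩
  exact hcr (hac.symm.trans (hab'.reachable.trans hbr))

/-- Without cross edges, an edge leaving `T(c)` must go up to a proper ancestor of `par c`. -/
theorem isAncestor_of_reachable (hT : T.noCrossEdges) {v c z : V} (hc : T.par c = v)
    (hback : ∀ a b : V, IsAncestor T.par c a → G.Adj a b →
      ¬ (IsAncestor T.par b v ∧ b ≠ v))
    (hz : (G.deleteIncidenceSet v).Reachable c z) : IsAncestor T.par c z := by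
  rw [SimpleGraph.reachable_iff_reflTransGen] at hz
  induction hz with
  | refl => exact .refl _ _
  | @tail a b _ hab hca =>
    obtain ⟨hab, -, hbv⟩ := deleteIncidenceSet_adj.mp hab
    rcases hT a b hab with hba | hba
    · exact hca.trans hba
    rcases hba.total_of_common hca with hbc | hcb
    · by_cases hbc' : b = c
      · exact hbc' ▸ .refl _ _
      · exact absurd ⟨hc ▸ hbc.of_ne hbc', hbv⟩ (hback a b hca hab)
    · exact hcb

end RootedSpanningTree

theorem articulation_point_iff_general {V : Type*} (G : SimpleGraph V)
    (r : V) (T : RootedSpanningTree G r)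
    (hT : T.noCrossEdges) (v : V) (hv : v ≠ r) :
    (∃ x y : V, x ≠ v ∧ y ≠ v ∧
      ¬ Relation.ReflTransGen (fun a b => G.Adj a b ∧ a ≠ v ∧ b ≠ v) x y) ↔
    (∃ c : V, T.par c = v ∧ c ≠ r ∧
      ∀ a b : V, IsAncestor T.par c a → G.Adj a b →
        ¬ (IsAncestor T.par b v ∧ b ≠ v)) := by
  simp only [SimpleGraph.reflTransGen_iff_reachable_deleteIncidenceSet]
  constructor
  · rintro ⟨x, y, hx, hy, hxy⟩
    obtain ⟨c, hc, hcr⟩ := T.exists_child_not_reachable_root hv hx hy hxy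
    exact ⟨c, hc, T.ne_root_of_par_eq hv hc,
      T.no_edge_to_proper_ancestor_of_not_reachable hv hc hcr⟩
  · rintro ⟨c, hc, hcr, hback⟩
    have hcv : c ≠ v := fun hcv => T.not_isAncestor_of_par_eq hv hc (hcv ▸ .refl _ _)
    refine ⟨c, r, hcv, hv.symm, fun hreach => hcr ?_⟩
    exact T.isAncestor_antisymm (T.isAncestor_of_reachable hT hc hback hreach) (T.reaches_root c)

/-- A non-root vertex `v` of a DFS tree `T` of a connected graph `G` is an
articulation point (there are vertices `x, y ≠ v` not connected in `G − v`)
if and only if `v` has a child `c` in `T` such that no edge of `G` joins a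
vertex of the subtree `T(c)` to a proper ancestor of `v`. -/
theorem articulation_point_iff {V : Type*} (G : SimpleGraph V)
    (hG : G.Connected) (r : V) (T : RootedSpanningTree G r)
    (hT : T.noCrossEdges) (v : V) (hv : v ≠ r) :
    (∃ x y : V, x ≠ v ∧ y ≠ v ∧
      ¬ Relation.ReflTransGen (fun a b => G.Adj a b ∧ a ≠ v ∧ b ≠ v) x y) ↔
    (∃ c : V, T.par c = v ∧ c ≠ r ∧
      ∀ a b : V, IsAncestor T.par c a → G.Adj a b →
        ¬ (IsAncestor T.par b v ∧ b ≠ v)) :=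
  articulation_point_iff_general G r T hT v hv
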